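/- Suppose α : (0,∞) → ℝ is nonnegative, piecewise continuous, strictly positive on some interval [h,H] with 0 < h < H < ∞, and ∫₀^∞ α(ξ) ξ² dξ < ∞. Define b_ε(k) = 1 + ∫₀^∞ α(ξ) ξ² (1 − sinc²(εξk/2))/ε² dξ. Then there exist constants C₀, C₁ > 0 independent of ε such that for all ε > 0 and k ∈ ℝ: b_ε(k) ≥ C₀(1 + k²) if |k| ≤ C₁/ε, and b_ε(k) ≥ C₀(1 + ε^{-2}) if |k| > C₁/ε. -/

import Mathlib

open MeasureTheory intervalIntegral
open scoped ENNReal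

/-- The unnormalized sinus cardinalis. -/
noncomputable def sinc (z : ℝ) : ℝ := if z = 0 then 1 else Real.sin z / z

lemma sinc_neg (z : ℝ) : sinc (-z) = sinc z := by
  unfold sinc
  rcases eq_or_ne z 0 with rfl | hz
  · simp
  · rw [if_neg (neg_ne_zero.2 hz), if_neg hz, Real.sin_neg, neg_div_neg_eq]

lemma sinc_sq_le_one (z : ℝ) : sinc z ^ 2 ≤ 1 := by
  unfold sinc
  split_ifs with hz
  · norm_num
  · rw [div_pow]
    exact (div_le_one (pow_two_pos_of_ne_zero hz)).2 Real.sin_sq_le_sq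

lemma one_sub_sinc_sq_ge_aux {z : ℝ} (hz0 : 0 ≤ z) (h2 : z ≤ 2) :
    z ^ 2 / 10 ≤ 1 - sinc z ^ 2 := by
  rcases eq_or_lt_of_le hz0 with rfl | hz
  · simp [sinc]
  have hπ := Real.pi_gt_three
  have hπ' := Real.pi_lt_d2
  -- sinc z = sin z / z
  have hsinc : sinc z = Real.sin z / z := if_neg hz.ne'
  have hcos : (0:ℝ) ≤ Real.cos (z / 2) :=
    Real.cos_nonneg_of_mem_Icc ⟨by linarith, by linarith⟩
  have hsinhalf : Real.sin (z / 2) ≤ z / 2 := Real.sin_le (by linarith)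
  have hmul : Real.sin z = 2 * Real.sin (z / 2) * Real.cos (z / 2) := by
    have := Real.sin_two_mul (z / 2)
    rw [show 2 * (z / 2) = z by ring] at this
    exact this
  have hsin_le : Real.sin z ≤ z * Real.cos (z / 2) := by
    rw [hmul]; nlinarith
  have hsinc_le : sinc z ≤ Real.cos (z / 2) := by
    rw [hsinc, div_le_iff₀ hz]; nlinarith
  have hsinc_nonneg : 0 ≤ sinc z := by
    rw [hsinc]
    exact div_nonneg (Real.sin_nonneg_of_nonneg_of_le_pi hz.le (by linarith)) hz.le
  have hsq : sinc z ^ 2 ≤ Real.cos (z / 2) ^ 2 :=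
    pow_le_pow_left₀ hsinc_nonneg hsinc_le 2
  -- Jordan: z / π ≤ sin (z/2)
  have hjordan : z / Real.pi ≤ Real.sin (z / 2) := by
    have := Real.mul_le_sin (x := z / 2) (by linarith) (by linarith)
    calc z / Real.pi = 2 / Real.pi * (z / 2) := by
          field_simp
      _ ≤ Real.sin (z / 2) := this
  have hsin_sq : Real.sin (z / 2) ^ 2 = 1 - Real.cos (z / 2) ^ 2 := Real.sin_sq (z / 2)
  have hzπ : 0 ≤ z / Real.pi := div_nonneg hz.le (by linarith)
  have h1 : (z / Real.pi) ^ 2 ≤ Real.sin (z / 2) ^ 2 := pow_le_pow_left₀ hzπ hjordan 2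
  have h2' : z ^ 2 / 10 ≤ (z / Real.pi) ^ 2 := by
    rw [div_pow]
    rw [div_le_div_iff₀ (by norm_num) (by positivity)]
    have hπsq : Real.pi ^ 2 ≤ 10 := by nlinarith
    nlinarith [sq_nonneg z]
  nlinarith

lemma one_sub_sinc_sq_ge {z : ℝ} (h2 : |z| ≤ 2) : z ^ 2 / 10 ≤ 1 - sinc z ^ 2 := by
  rcases le_or_gt 0 z with hz | hz
  · exact one_sub_sinc_sq_ge_aux hz (by rwa [abs_of_nonneg hz] at h2)
  · have := one_sub_sinc_sq_ge_aux (z := -z) (by linarith) (by rwa [abs_of_neg hz] at h2)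
    rw [sinc_neg] at this
    nlinarith

lemma one_sub_sinc_sq_ge' {z₀ z : ℝ} (h0 : 0 < z₀) (h2 : z₀ ≤ 2) (hz : z₀ ≤ |z|) :
    z₀ ^ 2 / 10 ≤ 1 - sinc z ^ 2 := by
  rcases le_or_gt |z| 2 with hle | hgt
  · have := one_sub_sinc_sq_ge hle
    have habs : z₀ ^ 2 ≤ z ^ 2 := by
      nlinarith [sq_abs z, abs_nonneg z]
    linarith
  · have hz0 : z ≠ 0 := by
      intro hzz; rw [hzz] at hgt; simp at hgt; linarith
    have hzz : (4:ℝ) < z ^ 2 := by nlinarith [sq_abs z, abs_nonneg z]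
    have hsin : Real.sin z ^ 2 ≤ 1 := Real.sin_sq_le_one z
    unfold sinc
    rw [if_neg hz0, div_pow]
    have hdiv : Real.sin z ^ 2 / z ^ 2 ≤ 1 / 4 := by
      rw [div_le_div_iff₀ (by positivity) (by norm_num)]
      nlinarith
    nlinarith

lemma measurable_sinc : Measurable sinc := by
  unfold sinc
  exact Measurable.ite (measurableSet_eq) measurable_const
    (Real.measurable_sin.div measurable_id)

theorem stmt16 (α : ℝ → ℝ)
    (hα : ∀ ξ ∈ Set.Ioi (0:ℝ), 0 ≤ α ξ)
    (h H : ℝ) (hh : 0 < h) (hhH : h < H)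
    (hposα : ∀ ξ ∈ Set.Icc h H, 0 < α ξ)
    (hint : MeasureTheory.IntegrableOn (fun ξ => α ξ * ξ ^ 2) (Set.Ioi 0) volume) :
    ∃ C₀ C₁ : ℝ, 0 < C₀ ∧ 0 < C₁ ∧ ∀ ε : ℝ, 0 < ε → ∀ k : ℝ,
      (|k| ≤ C₁ / ε →
        C₀ * (1 + k ^ 2) ≤
          1 + ∫ ξ in Set.Ioi (0:ℝ), α ξ * ξ ^ 2 * (1 - sinc (ε * ξ * k / 2) ^ 2) / ε ^ 2) ∧
      (C₁ / ε < |k| →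
        C₀ * (1 + ε⁻¹ ^ 2) ≤
          1 + ∫ ξ in Set.Ioi (0:ℝ), α ξ * ξ ^ 2 * (1 - sinc (ε * ξ * k / 2) ^ 2) / ε ^ 2) := by
  have hH : 0 < H := hh.trans hhH
  set g : ℝ → ℝ := fun ξ => α ξ * ξ ^ 2 with hg
  have hIccSub : Set.Icc h H ⊆ Set.Ioi (0:ℝ) := fun x hx => lt_of_lt_of_le hh hx.1
  have hgIcc : IntegrableOn g (Set.Icc h H) volume := hint.mono_set hIccSub
  set I := ∫ ξ in Set.Icc h H, g ξ with hI
  have hIpos : 0 < I := by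
    rw [hI]
    have hnn : 0 ≤ᵐ[volume.restrict (Set.Icc h H)] g := by
      refine (ae_restrict_iff' measurableSet_Icc).2 (Filter.Eventually.of_forall fun ξ hξ => ?_)
      exact mul_nonneg (hα ξ (hIccSub hξ)) (sq_nonneg ξ)
    refine (setIntegral_pos_iff_support_of_nonneg_ae hnn hgIcc).2 ?_
    have hsub : Set.Icc h H ⊆ Function.support g ∩ Set.Icc h H := by
      intro ξ hξ
      have hξ0 : 0 < ξ := lt_of_lt_of_le hh hξ.1
      have hgpos : 0 < g ξ := mul_pos (hposα ξ hξ) (by positivity)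
      exact ⟨hgpos.ne', hξ⟩
    calc (0:ℝ≥0∞) < ENNReal.ofReal (H - h) := by
          simp [ENNReal.ofReal_pos]; linarith
      _ = volume (Set.Icc h H) := (Real.volume_Icc).symm
      _ ≤ volume (Function.support g ∩ Set.Icc h H) := measure_mono hsub
  -- key integral lower bound
  have key : ∀ ε : ℝ, 0 < ε → ∀ k : ℝ, ∀ c : ℝ, 0 ≤ c →
      (∀ ξ ∈ Set.Icc h H, c ≤ (1 - sinc (ε * ξ * k / 2) ^ 2) / ε ^ 2) →
      c * I ≤ ∫ ξ in Set.Ioi (0:ℝ), α ξ * ξ ^ 2 * (1 - sinc (ε * ξ * k / 2) ^ 2) / ε ^ 2 := by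
    intro ε hε k c hc hcle
    set w : ℝ → ℝ := fun ξ => (1 - sinc (ε * ξ * k / 2) ^ 2) / ε ^ 2 with hw
    have hfeq : (fun ξ => α ξ * ξ ^ 2 * (1 - sinc (ε * ξ * k / 2) ^ 2) / ε ^ 2)
        = fun ξ => w ξ * g ξ := by
      funext ξ; simp only [hw, hg]; ring
    have hwmeas : Measurable w := by
      apply Measurable.div_const
      have harg : Measurable fun ξ : ℝ => ε * ξ * k / 2 :=
        ((measurable_const.mul measurable_id).mul_const k).div_const 2
      exact measurable_const.sub ((measurable_sinc.comp harg).pow_const 2)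
    have hwnonneg : ∀ ξ, 0 ≤ w ξ :=
      fun ξ => div_nonneg (by linarith [sinc_sq_le_one (ε * ξ * k / 2)]) (sq_nonneg ε)
    have hwbdd : ∀ ξ, ‖w ξ‖ ≤ (ε ^ 2)⁻¹ := by
      intro ξ
      rw [Real.norm_eq_abs, abs_of_nonneg (hwnonneg ξ)]
      show (1 - sinc (ε * ξ * k / 2) ^ 2) / ε ^ 2 ≤ (ε ^ 2)⁻¹
      rw [div_eq_mul_inv]
      have h1 : 1 - sinc (ε * ξ * k / 2) ^ 2 ≤ 1 := by nlinarith [sq_nonneg (sinc (ε * ξ * k / 2))]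
      have : (0:ℝ) < (ε ^ 2)⁻¹ := by positivity
      nlinarith
    have hfint : IntegrableOn (fun ξ => α ξ * ξ ^ 2 * (1 - sinc (ε * ξ * k / 2) ^ 2) / ε ^ 2)
        (Set.Ioi 0) volume := by
      rw [hfeq]
      exact hint.bdd_mul (hwmeas.aestronglyMeasurable) (Filter.Eventually.of_forall hwbdd)
    have hfnonneg : 0 ≤ᵐ[volume.restrict (Set.Ioi (0:ℝ))]
        fun ξ => α ξ * ξ ^ 2 * (1 - sinc (ε * ξ * k / 2) ^ 2) / ε ^ 2 := by
      refine (ae_restrict_iff' measurableSet_Ioi).2 (Filter.Eventually.of_forall fun ξ hξ => ?_)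
      have := hα ξ hξ
      have := hwnonneg ξ
      have : 0 ≤ w ξ * g ξ := mul_nonneg (hwnonneg ξ) (mul_nonneg (hα ξ hξ) (sq_nonneg ξ))
      calc (0:ℝ) ≤ w ξ * g ξ := this
        _ = α ξ * ξ ^ 2 * (1 - sinc (ε * ξ * k / 2) ^ 2) / ε ^ 2 := by
            simp only [hw, hg]; ring
    have step1 : ∫ ξ in Set.Icc h H, α ξ * ξ ^ 2 * (1 - sinc (ε * ξ * k / 2) ^ 2) / ε ^ 2
        ≤ ∫ ξ in Set.Ioi (0:ℝ), α ξ * ξ ^ 2 * (1 - sinc (ε * ξ * k / 2) ^ 2) / ε ^ 2 :=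
      setIntegral_mono_set hfint hfnonneg (HasSubset.Subset.eventuallyLE hIccSub)
    have step2 : ∫ ξ in Set.Icc h H, c * g ξ
        ≤ ∫ ξ in Set.Icc h H, α ξ * ξ ^ 2 * (1 - sinc (ε * ξ * k / 2) ^ 2) / ε ^ 2 := by
      refine setIntegral_mono_on (hgIcc.const_mul c)
        (hfint.mono_set hIccSub) measurableSet_Icc (fun ξ hξ => ?_)
      have hgnn : 0 ≤ g ξ := mul_nonneg (hα ξ (hIccSub hξ)) (sq_nonneg ξ)
      have := hcle ξ hξ
      calc c * g ξ ≤ w ξ * g ξ := mul_le_mul_of_nonneg_right this hgnn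
        _ = α ξ * ξ ^ 2 * (1 - sinc (ε * ξ * k / 2) ^ 2) / ε ^ 2 := by
            simp only [hw, hg]; ring
    have step3 : ∫ ξ in Set.Icc h H, c * g ξ = c * I := by
      rw [hI]; exact integral_const_mul c g
    linarith
  refine ⟨min 1 (min (h ^ 2 * I / 40) ((2 * h / H) ^ 2 * I / 10)), 4 / H,
    by positivity, by positivity, fun ε hε k => ?_⟩
  constructor
  · intro hk
    have hcle : ∀ ξ ∈ Set.Icc h H, h ^ 2 * k ^ 2 / 40 ≤ (1 - sinc (ε * ξ * k / 2) ^ 2) / ε ^ 2 := by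
      intro ξ hξ
      have hξ0 : 0 < ξ := lt_of_lt_of_le hh hξ.1
      have habs : |ε * ξ * k / 2| ≤ 2 := by
        rw [abs_div, abs_mul, abs_mul, abs_of_pos hε, abs_of_pos hξ0]
        rw [show |(2:ℝ)| = 2 by norm_num]
        rw [div_le_iff₀ (by norm_num : (0:ℝ) < 2)]
        have h1 : |k| ≤ 4 / H / ε := hk
        have h2 : ε * |k| ≤ 4 / H := by
          rw [div_div] at h1
          calc ε * |k| ≤ ε * (4 / (H * ε)) := by
                exact mul_le_mul_of_nonneg_left h1 hε.le
            _ = 4 / H := by field_simp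
        calc ε * ξ * |k| = ξ * (ε * |k|) := by ring
          _ ≤ H * (4 / H) := by
              apply mul_le_mul hξ.2 h2 (by positivity) hH.le
          _ = 4 := by field_simp
          _ ≤ 2 * 2 := by norm_num
      have hb := one_sub_sinc_sq_ge habs
      rw [le_div_iff₀ (by positivity : (0:ℝ) < ε ^ 2)]
      have hξsq : h ^ 2 ≤ ξ ^ 2 := by nlinarith [hξ.1]
      nlinarith [mul_nonneg (sub_nonneg.2 hξsq) (mul_nonneg (sq_nonneg ε) (sq_nonneg k))]
    have hkey := key ε hε k (h ^ 2 * k ^ 2 / 40) (by positivity) hcle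
    have hC : min 1 (min (h ^ 2 * I / 40) ((2 * h / H) ^ 2 * I / 10)) ≤ 1 :=
      min_le_left _ _
    have hC' : min 1 (min (h ^ 2 * I / 40) ((2 * h / H) ^ 2 * I / 10)) ≤ h ^ 2 * I / 40 :=
      (min_le_right _ _).trans (min_le_left _ _)
    nlinarith [sq_nonneg k, hkey, min_le_left (1:ℝ) (min (h ^ 2 * I / 40) ((2 * h / H) ^ 2 * I / 10))]
  · intro hk
    have hz0 : (0:ℝ) < 2 * h / H := by positivity
    have hz2 : 2 * h / H ≤ 2 := by
      rw [div_le_iff₀ hH]; linarith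
    have hcle : ∀ ξ ∈ Set.Icc h H,
        (2 * h / H) ^ 2 / 10 * ε⁻¹ ^ 2 ≤ (1 - sinc (ε * ξ * k / 2) ^ 2) / ε ^ 2 := by
      intro ξ hξ
      have hξ0 : 0 < ξ := lt_of_lt_of_le hh hξ.1
      have habs : 2 * h / H ≤ |ε * ξ * k / 2| := by
        rw [abs_div, abs_mul, abs_mul, abs_of_pos hε, abs_of_pos hξ0]
        rw [show |(2:ℝ)| = 2 by norm_num]
        rw [le_div_iff₀ (by norm_num : (0:ℝ) < 2)]
        have h1 : 4 / H / ε < |k| := hk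
        have h2 : 4 / H ≤ ε * |k| := by
          rw [div_div] at h1
          calc 4 / H = ε * (4 / (H * ε)) := by field_simp
            _ ≤ ε * |k| := mul_le_mul_of_nonneg_left h1.le hε.le
        calc 2 * h / H * 2 = h * (4 / H) := by ring
          _ ≤ ξ * (ε * |k|) := by
              apply mul_le_mul hξ.1 h2 (by positivity) hξ0.le
          _ = ε * ξ * |k| := by ring
      have hb := one_sub_sinc_sq_ge' hz0 hz2 habs
      rw [le_div_iff₀ (by positivity : (0:ℝ) < ε ^ 2)]
      have hεinv : ε⁻¹ ^ 2 * ε ^ 2 = 1 := by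
        field_simp
      nlinarith
    have hkey := key ε hε k ((2 * h / H) ^ 2 / 10 * ε⁻¹ ^ 2) (by positivity) hcle
    have hC : min 1 (min (h ^ 2 * I / 40) ((2 * h / H) ^ 2 * I / 10)) ≤ 1 :=
      min_le_left _ _
    have hC' : min 1 (min (h ^ 2 * I / 40) ((2 * h / H) ^ 2 * I / 10)) ≤ (2 * h / H) ^ 2 * I / 10 :=
      (min_le_right _ _).trans (min_le_right _ _)
    nlinarith [sq_nonneg ε⁻¹, hkey]
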